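/- For all measurable u, v, w, z : ℝ → ℝ belonging to L²(ℝ), one has the estimate ∫_ℝ∫_ℝ ln(1+|x−y|)|u(x)v(x)||w(y)z(y)| dx dy ≤ ‖u‖_*‖v‖_*‖w‖₂‖z‖₂ + ‖u‖₂‖v‖₂‖w‖_*‖z‖_*; in particular B₁(uv, wz) ≤ ‖u‖_*‖v‖_*‖w‖₂‖z‖₂ + ‖u‖₂‖v‖₂‖w‖_*‖z‖_* whenever the right-hand side is finite. -/

import Mathlib

open MeasureTheory Filter Topology

noncomputable section

/-- Squared Gagliardo seminorm `[u]²` as an extended-real double integral. -/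
def gagSqE (u : ℝ → ℝ) : ENNReal :=
  ∫⁻ x : ℝ, ∫⁻ y : ℝ, ENNReal.ofReal ((u x - u y) ^ 2 / |x - y| ^ 2)

/-- Membership in the fractional Sobolev space `H^{1/2}(ℝ)`:
`u ∈ L²(ℝ)` and `[u]² < ∞`. -/
def memH (u : ℝ → ℝ) : Prop :=
  MemLp u 2 volume ∧ gagSqE u < ⊤

/-- Squared `H^{1/2}` norm `‖u‖² = [u]² + ‖u‖₂²`. -/
def HnormSq (u : ℝ → ℝ) : ℝ :=
  (∫ x : ℝ, ∫ y : ℝ, (u x - u y) ^ 2 / |x - y| ^ 2) + ∫ x : ℝ, (u x) ^ 2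

/-- The `H^{1/2}` norm `‖u‖`. -/
def Hnorm (u : ℝ → ℝ) : ℝ := Real.sqrt (HnormSq u)

/-- Squared weighted norm `‖u‖_*² = ∫ ln(1+|x|) u(x)² dx`. -/
def starSq (u : ℝ → ℝ) : ℝ := ∫ x : ℝ, Real.log (1 + |x|) * (u x) ^ 2

/-- The weighted norm `‖u‖_*`. -/
def starNorm (u : ℝ → ℝ) : ℝ := Real.sqrt (starSq u)

/-- Membership in the space `X = {u ∈ H^{1/2}(ℝ) : ∫ ln(1+|x|)u² < ∞}`. -/
def memX (u : ℝ → ℝ) : Prop :=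
  memH u ∧ (∫⁻ x : ℝ, ENNReal.ofReal (Real.log (1 + |x|) * (u x) ^ 2)) < ⊤

/-- Squared norm of `X`: `‖u‖_X² = ‖u‖² + ‖u‖_*²`. -/
def XnormSq (u : ℝ → ℝ) : ℝ := HnormSq u + starSq u

/-- The norm of `X`. -/
def Xnorm (u : ℝ → ℝ) : ℝ := Real.sqrt (XnormSq u)

/-- The `L^t(ℝ)` norm `‖u‖_t`. -/
def LtNorm (t : ℝ) (u : ℝ → ℝ) : ℝ := (∫ x : ℝ, |u x| ^ t) ^ (1 / t)

/-- `B₁(u,v) = ∫∫ ln(1+|x−y|) u(x) v(y) dx dy`. -/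
def B1 (u v : ℝ → ℝ) : ℝ :=
  ∫ x : ℝ, ∫ y : ℝ, Real.log (1 + |x - y|) * (u x * v y)

/-- `B₂(u,v) = ∫∫ ln(1+1/|x−y|) u(x) v(y) dx dy`. -/
def B2 (u v : ℝ → ℝ) : ℝ :=
  ∫ x : ℝ, ∫ y : ℝ, Real.log (1 + 1 / |x - y|) * (u x * v y)

/-- `B₀ = B₁ − B₂`. -/
def B0 (u v : ℝ → ℝ) : ℝ := B1 u v - B2 u v

def V0 (u : ℝ → ℝ) : ℝ := B0 (fun x => (u x) ^ 2) (fun x => (u x) ^ 2)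
def V1 (u : ℝ → ℝ) : ℝ := B1 (fun x => (u x) ^ 2) (fun x => (u x) ^ 2)
def V2 (u : ℝ → ℝ) : ℝ := B2 (fun x => (u x) ^ 2) (fun x => (u x) ^ 2)

/-- The primitive `F(s) = ∫₀^s f(t) dt`. -/
def Fprim (f : ℝ → ℝ) (s : ℝ) : ℝ := ∫ t in (0 : ℝ)..s, f t

/-- The energy functional `I(u) = ½‖u‖² + ¼V₀(u) − ∫ F(u)`. -/
def Ifun (f : ℝ → ℝ) (u : ℝ → ℝ) : ℝ :=
  (1 / 2) * HnormSq u + (1 / 4) * V0 u - ∫ x : ℝ, Fprim f (u x)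

/-- The `H^{1/2}` inner product. -/
def Hinner (u v : ℝ → ℝ) : ℝ :=
  (∫ x : ℝ, ∫ y : ℝ, (u x - u y) * (v x - v y) / |x - y| ^ 2) + ∫ x : ℝ, u x * v x

/-- The inner product of `X`. -/
def Xinner (u v : ℝ → ℝ) : ℝ :=
  Hinner u v + ∫ x : ℝ, Real.log (1 + |x|) * (u x * v x)

/-- The Fréchet derivative of `I` at `u` evaluated at `v`:
`I'(u)(v) = ⟨u,v⟩ + B₀(u², uv) − ∫ f(u) v`. -/
def Iprime (f : ℝ → ℝ) (u v : ℝ → ℝ) : ℝ :=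
  Hinner u v + B0 (fun x => (u x) ^ 2) (fun x => u x * v x) - ∫ x : ℝ, f (u x) * v x

/-- The dual norm `‖I'(u)‖_{X'}`. -/
def IprimeNorm (f : ℝ → ℝ) (u : ℝ → ℝ) : ℝ :=
  sSup {r : ℝ | ∃ v : ℝ → ℝ, memX v ∧ Xnorm v ≤ 1 ∧ r = |Iprime f u v|}

/-- `u` is a nontrivial element (not a.e. zero). -/
def Nontriv (u : ℝ → ℝ) : Prop := ¬ (u =ᵐ[volume] (0 : ℝ → ℝ))

/-- `u ∈ X` is a critical point of `I` (`I'(u) = 0` in `X'`). -/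
def IsCritPt (f : ℝ → ℝ) (u : ℝ → ℝ) : Prop :=
  memX u ∧ ∀ v : ℝ → ℝ, memX v → Iprime f u v = 0

/-- Critical exponential growth at `+∞`. -/
def CritExpGrowth (f : ℝ → ℝ) : Prop :=
  ∃ ω : ℝ, ω ∈ Set.Ioc (0 : ℝ) Real.pi ∧ ∃ α₀ ∈ Set.Ioo (0 : ℝ) ω,
    (∀ α : ℝ, α₀ < α →
      Tendsto (fun s : ℝ => f s / (Real.exp (α * s ^ 2) - 1)) atTop (𝓝 0)) ∧
    (∀ α ∈ Set.Ioo (0 : ℝ) α₀,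
      Tendsto (fun s : ℝ => f s / (Real.exp (α * s ^ 2) - 1)) atTop atTop)

/-- Subcritical exponential growth at `+∞`. -/
def SubcritExpGrowth (f : ℝ → ℝ) : Prop :=
  ∀ α : ℝ, 0 < α →
    Tendsto (fun s : ℝ => f s / (Real.exp (α * s ^ 2) - 1)) atTop (𝓝 0)

/-- Condition `(f₁)`: `f` continuous, `f(0) = 0`, critical exponential growth, `F ≥ 0`. -/
def Cond_f1 (f : ℝ → ℝ) : Prop :=
  Continuous f ∧ f 0 = 0 ∧ CritExpGrowth f ∧ ∀ t : ℝ, 0 ≤ Fprim f t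

/-- Condition `(f₁')`: `f` continuous, odd, subcritical exponential growth, `F ≥ 0`. -/
def Cond_f1' (f : ℝ → ℝ) : Prop :=
  Continuous f ∧ (∀ t : ℝ, f (-t) = - f t) ∧ SubcritExpGrowth f ∧ ∀ t : ℝ, 0 ≤ Fprim f t

/-- Condition `(f₂)`: `lim_{|t|→0} f(t)/|t| = 0`. -/
def Cond_f2 (f : ℝ → ℝ) : Prop :=
  Tendsto (fun t : ℝ => f t / |t|) (𝓝[≠] (0 : ℝ)) (𝓝 0)

/-- Condition `(f₃)`: there is `θ > 4` with `f(t)t ≥ θF(t) > 0` for all `t ≠ 0`. -/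
def Cond_f3 (f : ℝ → ℝ) : Prop :=
  ∃ θ : ℝ, 4 < θ ∧ ∀ t : ℝ, t ≠ 0 → θ * Fprim f t ≤ f t * t ∧ 0 < Fprim f t

/-- Condition `(f₅)`: `t ↦ f(t)/t³` is increasing on `(0,∞)`. -/
def Cond_f5 (f : ℝ → ℝ) : Prop :=
  StrictMonoOn (fun t : ℝ => f t / t ^ 3) (Set.Ioi (0 : ℝ))

/-- Admissible mountain pass paths: `γ ∈ C([0,1], X)` with `γ(0) = 0`, `I(γ(1)) < 0`. -/
def InGamma (f : ℝ → ℝ) (γ : ℝ → ℝ → ℝ) : Prop :=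
  (∀ t ∈ Set.Icc (0 : ℝ) 1, memX (γ t)) ∧
  (∀ t ∈ Set.Icc (0 : ℝ) 1, ∀ ε : ℝ, 0 < ε → ∃ δ : ℝ, 0 < δ ∧
      ∀ s ∈ Set.Icc (0 : ℝ) 1, |s - t| < δ →
        Xnorm (fun x => γ s x - γ t x) < ε) ∧
  (∀ x : ℝ, γ 0 x = 0) ∧ Ifun f (γ 1) < 0

/-- The mountain pass level `c_mp`. -/
def cMP (f : ℝ → ℝ) : ℝ :=
  sInf {c : ℝ | ∃ γ : ℝ → ℝ → ℝ, InGamma f γ ∧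
    c = sSup ((fun t => Ifun f (γ t)) '' Set.Icc (0 : ℝ) 1)}

end

/-- `L²`-type weighted quantity in `ℝ≥0∞` corresponding to `‖u‖_*`. -/
noncomputable def eStar (u : ℝ → ℝ) : ENNReal :=
  (∫⁻ x : ℝ, ENNReal.ofReal (Real.log (1 + |x|) * (u x) ^ 2)) ^ (1/2 : ℝ)

/-- `L²` norm in `ℝ≥0∞`. -/
noncomputable def eL2 (u : ℝ → ℝ) : ENNReal :=
  (∫⁻ x : ℝ, ENNReal.ofReal ((u x) ^ 2)) ^ (1/2 : ℝ)


/-!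
Since `1 + |x - y| ≤ (1 + |x|)(1 + |y|)`, the kernel `ln(1 + |x - y|)` is dominated by
`ln(1 + |x|) + ln(1 + |y|)`, so the double integral splits into two products of single
integrals, each of which is bounded by a (weighted) Cauchy–Schwarz inequality. The bound on
`B₁` follows because `|B₁(uv, wz)|` is at most the double integral of the absolute value.
-/

open ENNReal

theorem log_one_add_abs_sub_le (x y : ℝ) :
    Real.log (1 + |x - y|) ≤ Real.log (1 + |x|) + Real.log (1 + |y|) := by
  rw [← Real.log_mul (by positivity) (by positivity)]
  refine Real.log_le_log (by positivity) ?_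
  nlinarith [abs_sub x y, abs_nonneg x, abs_nonneg y]

theorem log_one_add_abs_nonneg (x : ℝ) : 0 ≤ Real.log (1 + |x|) :=
  Real.log_nonneg (le_add_of_nonneg_right (abs_nonneg x))

section

variable {α β : Type*} [MeasurableSpace α] [MeasurableSpace β] {μ : Measure α} {ν : Measure β}

theorem lintegral_ofReal_mul_abs_mul_le {c f g : α → ℝ} (hc : AEMeasurable c μ)
    (hc0 : ∀ x, 0 ≤ c x) (hf : AEMeasurable f μ) (hg : AEMeasurable g μ) :
    ∫⁻ x, ENNReal.ofReal (c x * |f x * g x|) ∂μ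
      ≤ (∫⁻ x, ENNReal.ofReal (c x * f x ^ 2) ∂μ) ^ (1 / 2 : ℝ)
        * (∫⁻ x, ENNReal.ofReal (c x * g x ^ 2) ∂μ) ^ (1 / 2 : ℝ) := by
  -- Cauchy–Schwarz for `√c |f|` and `√c |g|`.
  have hsq : ∀ (h : α → ℝ) x,
      ENNReal.ofReal (√(c x) * |h x|) ^ (2 : ℝ) = ENNReal.ofReal (c x * h x ^ 2) := by
    intro h x
    rw [ENNReal.ofReal_rpow_of_nonneg (by positivity) zero_le_two, Real.rpow_two, mul_pow,
      sq_abs, Real.sq_sqrt (hc0 x)]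
  have hsplit : ∀ x, ENNReal.ofReal (c x * |f x * g x|)
      = ENNReal.ofReal (√(c x) * |f x|) * ENNReal.ofReal (√(c x) * |g x|) := by
    intro x
    rw [← ENNReal.ofReal_mul (by positivity), abs_mul]
    congr 1
    linear_combination (-(|f x| * |g x|)) * Real.mul_self_sqrt (hc0 x)
  simp_rw [hsplit, ← hsq]
  exact ENNReal.lintegral_mul_le_Lp_mul_Lq μ Real.HolderConjugate.two_two
    (by fun_prop) (by fun_prop)

theorem lintegral_lintegral_mul_add_mul {f₁ f₂ : α → ℝ≥0∞} {g₁ g₂ : β → ℝ≥0∞}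
    (hf₁ : AEMeasurable f₁ μ) (hf₂ : AEMeasurable f₂ μ)
    (hg₁ : AEMeasurable g₁ ν) (hg₂ : AEMeasurable g₂ ν) :
    ∫⁻ x, ∫⁻ y, (f₁ x * g₁ y + f₂ x * g₂ y) ∂ν ∂μ
      = (∫⁻ x, f₁ x ∂μ) * (∫⁻ y, g₁ y ∂ν) + (∫⁻ x, f₂ x ∂μ) * (∫⁻ y, g₂ y ∂ν) := by
  have hinner : ∀ x, ∫⁻ y, (f₁ x * g₁ y + f₂ x * g₂ y) ∂ν
      = f₁ x * (∫⁻ y, g₁ y ∂ν) + f₂ x * (∫⁻ y, g₂ y ∂ν) := fun x => by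
    rw [lintegral_add_left' (hg₁.const_mul _), lintegral_const_mul'' _ hg₁,
      lintegral_const_mul'' _ hg₂]
  simp_rw [hinner]
  rw [lintegral_add_left' (hf₁.mul_const _), lintegral_mul_const'' _ hf₁,
    lintegral_mul_const'' _ hf₂]

theorem lintegral_lintegral_kernel_le {K : α → β → ℝ} {a f : α → ℝ} {b g : β → ℝ}
    (hK : ∀ x y, K x y ≤ a x + b y) (ha0 : ∀ x, 0 ≤ a x) (hb0 : ∀ y, 0 ≤ b y)
    (ha : AEMeasurable a μ) (hf : AEMeasurable f μ) (hb : AEMeasurable b ν)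
    (hg : AEMeasurable g ν) :
    ∫⁻ x, ∫⁻ y, ENNReal.ofReal (K x y * (|f x| * |g y|)) ∂ν ∂μ
      ≤ (∫⁻ x, ENNReal.ofReal (a x * |f x|) ∂μ) * (∫⁻ y, ENNReal.ofReal |g y| ∂ν)
        + (∫⁻ x, ENNReal.ofReal |f x| ∂μ) * (∫⁻ y, ENNReal.ofReal (b y * |g y|) ∂ν) := by
  rw [← lintegral_lintegral_mul_add_mul (by fun_prop) (by fun_prop) (by fun_prop) (by fun_prop)]
  refine lintegral_mono fun x => lintegral_mono fun y => ?_
  have ha' := mul_nonneg (ha0 x) (abs_nonneg (f x))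
  have hb' := mul_nonneg (hb0 y) (abs_nonneg (g y))
  calc ENNReal.ofReal (K x y * (|f x| * |g y|))
      ≤ ENNReal.ofReal ((a x + b y) * (|f x| * |g y|)) := by gcongr; exact hK x y
    _ = ENNReal.ofReal (a x * |f x| * |g y| + |f x| * (b y * |g y|)) := by ring_nf
    _ = _ := by
      rw [ENNReal.ofReal_add (by positivity) (by positivity), ENNReal.ofReal_mul ha',
        ENNReal.ofReal_mul (abs_nonneg _)]

theorem ofReal_integral_integral_le_lintegral_lintegral_enorm (F : α → β → ℝ) :
    ENNReal.ofReal (∫ x, ∫ y, F x y ∂ν ∂μ) ≤ ∫⁻ x, ∫⁻ y, ‖F x y‖ₑ ∂ν ∂μ :=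
  calc ENNReal.ofReal (∫ x, ∫ y, F x y ∂ν ∂μ) ≤ ‖∫ x, ∫ y, F x y ∂ν ∂μ‖ₑ := Real.ofReal_le_enorm _
    _ ≤ ∫⁻ x, ‖∫ y, F x y ∂ν‖ₑ ∂μ := enorm_integral_le_lintegral_enorm _
    _ ≤ ∫⁻ x, ∫⁻ y, ‖F x y‖ₑ ∂ν ∂μ := lintegral_mono fun _ => enorm_integral_le_lintegral_enorm _

theorem sqrt_integral_eq_toReal_lintegral_rpow {f : α → ℝ} (hf0 : ∀ x, 0 ≤ f x)
    (hf : AEStronglyMeasurable f μ) :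
    √(∫ x, f x ∂μ) = ((∫⁻ x, ENNReal.ofReal (f x) ∂μ) ^ (1 / 2 : ℝ)).toReal := by
  rw [integral_eq_lintegral_of_nonneg_ae (.of_forall hf0) hf, ← ENNReal.toReal_rpow,
    Real.sqrt_eq_rpow]

end

theorem lintegral_ofReal_abs_mul_le_eStar_mul {f g : ℝ → ℝ} (hf : AEMeasurable f)
    (hg : AEMeasurable g) :
    ∫⁻ x, ENNReal.ofReal (Real.log (1 + |x|) * |f x * g x|) ≤ eStar f * eStar g :=
  lintegral_ofReal_mul_abs_mul_le (by fun_prop) log_one_add_abs_nonneg hf hg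

theorem lintegral_ofReal_abs_mul_le_eL2_mul {f g : ℝ → ℝ} (hf : AEMeasurable f)
    (hg : AEMeasurable g) :
    ∫⁻ x, ENNReal.ofReal |f x * g x| ≤ eL2 f * eL2 g := by
  simpa [eL2] using
    lintegral_ofReal_mul_abs_mul_le (c := fun _ => 1) aemeasurable_const
      (fun _ => zero_le_one) hf hg

theorem eL2_lt_top {f : ℝ → ℝ} (hf : MemLp f 2 volume) : eL2 f < ⊤ := by
  convert hf.eLpNorm_lt_top
  rw [eL2, eLpNorm_eq_lintegral_rpow_enorm_toReal two_ne_zero ofNat_ne_top]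
  norm_num
  simp_rw [Real.enorm_eq_ofReal_abs, ← ENNReal.ofReal_pow (abs_nonneg _), sq_abs]

theorem starNorm_eq_toReal_eStar {f : ℝ → ℝ} (hf : AEStronglyMeasurable f) :
    starNorm f = (eStar f).toReal :=
  sqrt_integral_eq_toReal_lintegral_rpow
    (fun x => mul_nonneg (log_one_add_abs_nonneg x) (sq_nonneg _))
    ((by fun_prop : Measurable fun x : ℝ => Real.log (1 + |x|)).aestronglyMeasurable.mul (hf.pow 2))

theorem LtNorm_two_eq_toReal_eL2 {f : ℝ → ℝ} (hf : AEStronglyMeasurable f) :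
    LtNorm 2 f = (eL2 f).toReal := by
  simp_rw [LtNorm, ← Real.sqrt_eq_rpow, Real.rpow_two, sq_abs]
  exact sqrt_integral_eq_toReal_lintegral_rpow (fun x => sq_nonneg _) (by fun_prop)

theorem lintegral_lintegral_log_kernel_le {u v w z : ℝ → ℝ} (hu : AEMeasurable u)
    (hv : AEMeasurable v) (hw : AEMeasurable w) (hz : AEMeasurable z) :
    (∫⁻ x : ℝ, ∫⁻ y : ℝ,
        ENNReal.ofReal (Real.log (1 + |x - y|) * (|u x * v x| * |w y * z y|)))
      ≤ eStar u * eStar v * eL2 w * eL2 z + eL2 u * eL2 v * eStar w * eStar z := by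
  have hlog : AEMeasurable fun x : ℝ => Real.log (1 + |x|) := by fun_prop
  calc _ ≤ _ := lintegral_lintegral_kernel_le log_one_add_abs_sub_le log_one_add_abs_nonneg
        log_one_add_abs_nonneg hlog (hu.mul hv) hlog (hw.mul hz)
    _ ≤ (eStar u * eStar v) * (eL2 w * eL2 z) + (eL2 u * eL2 v) * (eStar w * eStar z) := by
      gcongr
      exacts [lintegral_ofReal_abs_mul_le_eStar_mul hu hv,
        lintegral_ofReal_abs_mul_le_eL2_mul hw hz,
        lintegral_ofReal_abs_mul_le_eL2_mul hu hv, lintegral_ofReal_abs_mul_le_eStar_mul hw hz]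
    _ = _ := by ring

theorem statement5_general (u v w z : ℝ → ℝ)
    (hu2 : MemLp u 2 volume) (hv2 : MemLp v 2 volume)
    (hw2 : MemLp w 2 volume) (hz2 : MemLp z 2 volume) :
    (∫⁻ x : ℝ, ∫⁻ y : ℝ,
        ENNReal.ofReal (Real.log (1 + |x - y|) * (|u x * v x| * |w y * z y|)))
      ≤ eStar u * eStar v * eL2 w * eL2 z + eL2 u * eL2 v * eStar w * eStar z ∧
    ((eStar u < ⊤ ∧ eStar v < ⊤ ∧ eStar w < ⊤ ∧ eStar z < ⊤) →
      B1 (fun x => u x * v x) (fun x => w x * z x)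
        ≤ starNorm u * starNorm v * LtNorm 2 w * LtNorm 2 z
            + LtNorm 2 u * LtNorm 2 v * starNorm w * starNorm z) := by
  have hbound := lintegral_lintegral_log_kernel_le hu2.aemeasurable hv2.aemeasurable
    hw2.aemeasurable hz2.aemeasurable
  refine ⟨hbound, fun ⟨hu, hv, hw, hz⟩ => ?_⟩
  have huL2 := eL2_lt_top hu2
  have hvL2 := eL2_lt_top hv2
  have hwL2 := eL2_lt_top hw2
  have hzL2 := eL2_lt_top hz2
  have hB1 : ENNReal.ofReal (B1 (fun x => u x * v x) (fun x => w x * z x))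
      ≤ eStar u * eStar v * eL2 w * eL2 z + eL2 u * eL2 v * eStar w * eStar z := by
    refine (ofReal_integral_integral_le_lintegral_lintegral_enorm _).trans
      (le_of_eq_of_le ?_ hbound)
    refine lintegral_congr fun x => lintegral_congr fun y => ?_
    rw [Real.enorm_eq_ofReal_abs, abs_mul, abs_of_nonneg (log_one_add_abs_nonneg _), abs_mul]
  rw [ENNReal.ofReal_le_iff_le_toReal (by finiteness), ENNReal.toReal_add (by finiteness)
    (by finiteness)] at hB1
  simpa only [ENNReal.toReal_mul, starNorm_eq_toReal_eStar, LtNorm_two_eq_toReal_eL2,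
    hu2.1, hv2.1, hw2.1, hz2.1] using hB1

/-- estimate for B₁(uv, wz). -/
theorem statement5 (u v w z : ℝ → ℝ)
    (hu : Measurable u) (hv : Measurable v) (hw : Measurable w) (hz : Measurable z)
    (hu2 : MemLp u 2 volume) (hv2 : MemLp v 2 volume)
    (hw2 : MemLp w 2 volume) (hz2 : MemLp z 2 volume) :
    (∫⁻ x : ℝ, ∫⁻ y : ℝ,
        ENNReal.ofReal (Real.log (1 + |x - y|) * (|u x * v x| * |w y * z y|)))
      ≤ eStar u * eStar v * eL2 w * eL2 z + eL2 u * eL2 v * eStar w * eStar z ∧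
    ((eStar u < ⊤ ∧ eStar v < ⊤ ∧ eStar w < ⊤ ∧ eStar z < ⊤) →
      B1 (fun x => u x * v x) (fun x => w x * z x)
        ≤ starNorm u * starNorm v * LtNorm 2 w * LtNorm 2 z
            + LtNorm 2 u * LtNorm 2 v * starNorm w * starNorm z) :=
  statement5_general u v w z hu2 hv2 hw2 hz2
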